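/- arXiv:2310.19837 — 2 statements merged into one kernel-verified Lean document; each statement's English description precedes it below -/
import Mathlib

section
/- Sufficiency for optimality (Lemma 2, converse direction): if random variables X, Y, U (finite-valued, on a common probability space) satisfy I[X:U] = 0, I[X:U|Y] = 0, and H[Y|(X,U)] = 0, then I[U:Y] = H[Y|X]. -/
open MeasureTheory ProbabilityTheory Real

noncomputable section

variable {Ω : Type*} [MeasurableSpace Ω]

/-- Shannon entropy (natural logarithm) of a finite-valued random variable `Z` under `μ`. -/
def ent {S : Type*} [Fintype S] (μ : Measure Ω) (Z : Ω → S) : ℝ :=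
  ∑ z : S, Real.negMulLog (μ (Z ⁻¹' {z})).toReal

/-- Conditional entropy `H[Z₁ | Z₂] = H[(Z₁,Z₂)] - H[Z₂]`. -/
def condEnt {S T : Type*} [Fintype S] [Fintype T] (μ : Measure Ω)
    (Z₁ : Ω → S) (Z₂ : Ω → T) : ℝ :=
  ent μ (fun ω => (Z₁ ω, Z₂ ω)) - ent μ Z₂

/-- Mutual information `I[Z₁ : Z₂] = H[Z₁] + H[Z₂] - H[(Z₁,Z₂)]`. -/
def mutInfo {S T : Type*} [Fintype S] [Fintype T] (μ : Measure Ω)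
    (Z₁ : Ω → S) (Z₂ : Ω → T) : ℝ :=
  ent μ Z₁ + ent μ Z₂ - ent μ (fun ω => (Z₁ ω, Z₂ ω))

/-- Conditional mutual information
`I[Z₁ : Z₂ | Z₃] = H[(Z₁,Z₃)] + H[(Z₂,Z₃)] - H[(Z₁,Z₂,Z₃)] - H[Z₃]`. -/
def condMutInfo {S T R : Type*} [Fintype S] [Fintype T] [Fintype R] (μ : Measure Ω)
    (Z₁ : Ω → S) (Z₂ : Ω → T) (Z₃ : Ω → R) : ℝ :=
  ent μ (fun ω => (Z₁ ω, Z₃ ω)) + ent μ (fun ω => (Z₂ ω, Z₃ ω))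
    - ent μ (fun ω => (Z₁ ω, Z₂ ω, Z₃ ω)) - ent μ Z₃


lemma ent_comp_equiv {S T : Type*} [Fintype S] [Fintype T] (μ : Measure Ω)
    (Z : Ω → S) (e : S ≃ T) : ent μ (fun ω => e (Z ω)) = ent μ Z := by
  unfold ent
  rw [← Equiv.sum_comp e]
  refine Finset.sum_congr rfl fun s _ => ?_
  have : (fun ω => e (Z ω)) ⁻¹' {e s} = Z ⁻¹' {s} := by
    ext ω; simp [e.injective.eq_iff]
  rw [this]

/-- Sufficiency for optimality (Lemma 2, converse direction). -/
theorem optimizer_sufficiency {𝒳 𝒴 𝒰 : Type*} [Fintype 𝒳] [Nonempty 𝒳] [MeasurableSpace 𝒳] [MeasurableSingletonClass 𝒳]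
    [Fintype 𝒴] [Nonempty 𝒴] [MeasurableSpace 𝒴] [MeasurableSingletonClass 𝒴]
    [Fintype 𝒰] [Nonempty 𝒰] [MeasurableSpace 𝒰] [MeasurableSingletonClass 𝒰]
    (μ : Measure Ω) [IsProbabilityMeasure μ]
    (X : Ω → 𝒳) (Y : Ω → 𝒴) (U : Ω → 𝒰)
    (hX : Measurable X) (hY : Measurable Y) (hU : Measurable U)
    (h1 : mutInfo μ X U = 0)
    (h2 : condMutInfo μ X U Y = 0)
    (h3 : condEnt μ Y (fun ω => (X ω, U ω)) = 0) :
    mutInfo μ U Y = condEnt μ Y X := by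
  have eYX : ent μ (fun ω => (Y ω, X ω)) = ent μ (fun ω => (X ω, Y ω)) := by
    exact ent_comp_equiv μ (fun ω => (X ω, Y ω)) (Equiv.prodComm 𝒳 𝒴)
  have eT : ent μ (fun ω => (Y ω, X ω, U ω)) = ent μ (fun ω => (X ω, U ω, Y ω)) := by
    exact ent_comp_equiv μ (fun ω => (X ω, U ω, Y ω))
      ⟨fun p => (p.2.2, p.1, p.2.1), fun p => (p.2.1, p.2.2, p.1), fun p => rfl, fun p => rfl⟩
  unfold mutInfo condMutInfo condEnt at *
  linarith
end
end

section
/- Converse entropy bound (information core of Theorem 3, bound (27)): let X, Y, C, W be finite-valued random variables on a common probability space such that W is independent of the pair (X, Y), I[C:X] = 0, and H[Y | (C, W)] = 0. Then for every x with μ(X = x) > 0, H[C] ≥ H[Y | X ← x]; in particular H[C] ≥ max over such x of H[Y | X ← x]. -/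
open MeasureTheory ProbabilityTheory Real

noncomputable section

variable {Ω : Type*} [MeasurableSpace Ω]

/-!
Conditioned on `X = x`, the key `C` keeps its law (it is independent of `X`), the pad `W` stays
independent of `Y`, and `Y` is still almost surely a function of `(C, W)`, since conditioning on an
event of positive probability only removes null sets. Under the conditional measure,
`H[Y] + H[W] = H[Y, W] ≤ H[Y, C, W] = H[C, W] ≤ H[C] + H[W]`.
Nonnegativity of mutual information, and its vanishing exactly under independence, come from
writing `I[Z₁ : Z₂] = ∑ p(s) p(t) klFun (p(s, t) / (p(s) p(t)))`.
-/

open Finset InformationTheory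

namespace Real

lemma negMulLog_sum_le {ι : Type*} (s : Finset ι) {f : ι → ℝ} (hf : ∀ i ∈ s, 0 ≤ f i) :
    negMulLog (∑ i ∈ s, f i) ≤ ∑ i ∈ s, negMulLog (f i) := by
  calc negMulLog (∑ i ∈ s, f i) = ∑ i ∈ s, f i * -log (∑ j ∈ s, f j) := by
        rw [← sum_mul, negMulLog]; ring
    _ ≤ ∑ i ∈ s, negMulLog (f i) := by
      refine sum_le_sum fun i hi => ?_
      rcases (hf i hi).eq_or_lt with h0 | hpos
      · simp [← h0]
      · rw [negMulLog, neg_mul, mul_neg, neg_le_neg_iff]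
        exact mul_le_mul_of_nonneg_left (log_le_log hpos (single_le_sum hf hi)) hpos.le

lemma mul_log_sub_log_nonneg {p q : ℝ} (hp : 0 ≤ p) (hpq : p ≤ q) : 0 ≤ p * (log q - log p) := by
  rcases hp.eq_or_lt with rfl | hp
  · simp
  · exact mul_nonneg hp.le (sub_nonneg.mpr (log_le_log hp hpq))

lemma mul_log_sub_log_eq_zero_iff {p q : ℝ} (hp : 0 ≤ p) (hpq : p ≤ q) :
    p * (log q - log p) = 0 ↔ p = 0 ∨ p = q := by
  rcases hp.eq_or_lt with rfl | hp
  · simp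
  · rw [mul_eq_zero, sub_eq_zero, or_iff_right hp.ne', or_iff_right hp.ne', eq_comm (a := p)]
    exact log_injOn_pos.eq_iff (hp.trans_le hpq) hp

lemma mul_log_sub_log_sub_log {p a b : ℝ} (hp : 0 ≤ p) (ha : p ≤ a) (hb : p ≤ b) :
    p * (log p - log a - log b) = a * b * klFun (p / (a * b)) + p - a * b := by
  rcases hp.eq_or_lt with rfl | hp
  · simp [klFun_zero]
  · have hab : a * b ≠ 0 := (mul_pos (hp.trans_le ha) (hp.trans_le hb)).ne'
    rw [klFun_apply, log_div hp.ne' hab, log_mul (hp.trans_le ha).ne' (hp.trans_le hb).ne']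
    linear_combination (1 - (log p - log a - log b)) * mul_div_cancel₀ p hab

lemma mul_klFun_div_nonneg {p q : ℝ} (hp : 0 ≤ p) (hq : 0 ≤ q) : 0 ≤ q * klFun (p / q) :=
  mul_nonneg hq (klFun_nonneg (div_nonneg hp hq))

lemma mul_klFun_div_eq_zero_iff {p q : ℝ} (hp : 0 ≤ p) (hq : 0 ≤ q) (hpq : q = 0 → p = 0) :
    q * klFun (p / q) = 0 ↔ p = q := by
  rcases hq.eq_or_lt with rfl | hq
  · simp [hpq rfl]
  · rw [mul_eq_zero, or_iff_right hq.ne', klFun_eq_zero_iff (div_nonneg hp hq.le),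
      div_eq_one_iff_eq hq.ne']

end Real

lemma Fintype.sum_sum_eq_zero_iff_of_nonneg {S T : Type*} [Fintype S] [Fintype T]
    {f : S → T → ℝ} (hf : ∀ s t, 0 ≤ f s t) : ∑ s, ∑ t, f s t = 0 ↔ ∀ s t, f s t = 0 := by
  rw [← Fintype.sum_prod_type', Fintype.sum_eq_zero_iff_of_nonneg fun p => hf p.1 p.2]
  simp [funext_iff]

section JointDistribution

variable {S T : Type*} [Fintype S] [Fintype T] {μ : Measure Ω} {Z₁ : Ω → S} {Z₂ : Ω → T}

lemma ent_pair_eq_sum :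
    ent μ (fun ω => (Z₁ ω, Z₂ ω)) = ∑ s, ∑ t, negMulLog (μ.real (Z₁ ⁻¹' {s} ∩ Z₂ ⁻¹' {t})) := by
  simp only [ent, Fintype.sum_prod_type, ← Set.singleton_prod_singleton, Set.mk_preimage_prod]
  rfl

lemma sum_measureReal_inter_preimage [MeasurableSpace T] [MeasurableSingletonClass T]
    [IsFiniteMeasure μ] {Z : Ω → T} (hZ : Measurable Z) (A : Set Ω) :
    ∑ t, μ.real (A ∩ Z ⁻¹' {t}) = μ.real A := by
  simp_rw [Set.inter_comm A, ← measureReal_restrict_apply (hZ (measurableSet_singleton _))]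
  rw [sum_measureReal_preimage_singleton _ fun t _ => hZ (measurableSet_singleton t)]
  simp [measureReal_restrict_apply MeasurableSet.univ]

lemma sum_measureReal_preimage [MeasurableSpace T] [MeasurableSingletonClass T]
    [IsProbabilityMeasure μ] {Z : Ω → T} (hZ : Measurable Z) :
    ∑ t, μ.real (Z ⁻¹' {t}) = 1 := by
  simpa using sum_measureReal_inter_preimage (μ := μ) hZ Set.univ

lemma ent_eq_sum_left [MeasurableSpace T] [MeasurableSingletonClass T] [IsFiniteMeasure μ]
    (h₂ : Measurable Z₂) :
    ent μ Z₁ = ∑ s, ∑ t, μ.real (Z₁ ⁻¹' {s} ∩ Z₂ ⁻¹' {t}) * -log (μ.real (Z₁ ⁻¹' {s})) := by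
  simp only [ent, ← measureReal_def]
  refine sum_congr rfl fun s _ => ?_
  rw [← sum_mul, sum_measureReal_inter_preimage h₂, negMulLog, neg_mul, mul_neg]

lemma ent_eq_sum_right [MeasurableSpace S] [MeasurableSingletonClass S] [IsFiniteMeasure μ]
    (h₁ : Measurable Z₁) :
    ent μ Z₂ = ∑ s, ∑ t, μ.real (Z₁ ⁻¹' {s} ∩ Z₂ ⁻¹' {t}) * -log (μ.real (Z₂ ⁻¹' {t})) := by
  rw [ent_eq_sum_left h₁, sum_comm]
  simp_rw [Set.inter_comm (Z₂ ⁻¹' _)]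

lemma condEnt_eq_sum [MeasurableSpace S] [MeasurableSingletonClass S] [IsFiniteMeasure μ]
    (h₁ : Measurable Z₁) :
    condEnt μ Z₁ Z₂ = ∑ s, ∑ t, μ.real (Z₁ ⁻¹' {s} ∩ Z₂ ⁻¹' {t}) *
      (log (μ.real (Z₂ ⁻¹' {t})) - log (μ.real (Z₁ ⁻¹' {s} ∩ Z₂ ⁻¹' {t}))) := by
  rw [condEnt, ent_pair_eq_sum, ent_eq_sum_right h₁, ← sum_sub_distrib]
  refine sum_congr rfl fun s _ => ?_
  rw [← sum_sub_distrib]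
  refine sum_congr rfl fun t _ => ?_
  rw [negMulLog]
  ring

lemma condEnt_eq_zero_iff [MeasurableSpace S] [MeasurableSingletonClass S] [IsFiniteMeasure μ]
    (h₁ : Measurable Z₁) :
    condEnt μ Z₁ Z₂ = 0 ↔
      ∀ s t, μ (Z₁ ⁻¹' {s} ∩ Z₂ ⁻¹' {t}) = 0 ∨ μ (Z₂ ⁻¹' {t} \ Z₁ ⁻¹' {s}) = 0 := by
  rw [condEnt_eq_sum h₁, Fintype.sum_sum_eq_zero_iff_of_nonneg fun s t =>
    mul_log_sub_log_nonneg measureReal_nonneg (measureReal_mono Set.inter_subset_right)]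
  refine forall₂_congr fun s t => ?_
  have hsplit := measureReal_inter_add_sdiff (μ := μ) (s := Z₂ ⁻¹' {t})
    (h₁ (measurableSet_singleton s))
  rw [mul_log_sub_log_eq_zero_iff measureReal_nonneg (measureReal_mono Set.inter_subset_right),
    ← measureReal_eq_zero_iff, ← measureReal_eq_zero_iff, Set.inter_comm (Z₁ ⁻¹' _)]
  exact or_congr_right ⟨fun h => by linarith, fun h => by linarith⟩

lemma condEnt_eq_zero_of_absolutelyContinuous [MeasurableSpace S] [MeasurableSingletonClass S]
    {ν : Measure Ω} [IsFiniteMeasure μ] [IsFiniteMeasure ν] (hνμ : ν ≪ μ) (h₁ : Measurable Z₁)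
    (h : condEnt μ Z₁ Z₂ = 0) : condEnt ν Z₁ Z₂ = 0 :=
  (condEnt_eq_zero_iff h₁).2 fun s t => ((condEnt_eq_zero_iff h₁).1 h s t).imp (@hνμ _) (@hνμ _)

lemma ent_comp_le [MeasurableSpace S] [MeasurableSingletonClass S] [IsFiniteMeasure μ]
    {Z : Ω → S} (hZ : Measurable Z) (f : S → T) : ent μ (fun ω => f (Z ω)) ≤ ent μ Z := by
  classical
  have hfiber (t : T) :
      μ.real ((fun ω => f (Z ω)) ⁻¹' {t}) = ∑ s with f s = t, μ.real (Z ⁻¹' {s}) := by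
    rw [sum_measureReal_preimage_singleton _ fun s _ => hZ (measurableSet_singleton s)]
    congr 1
    ext ω
    simp
  simp only [ent, ← measureReal_def, hfiber]
  calc ∑ t, negMulLog (∑ s with f s = t, μ.real (Z ⁻¹' {s}))
      ≤ ∑ t, ∑ s with f s = t, negMulLog (μ.real (Z ⁻¹' {s})) :=
        sum_le_sum fun t _ => negMulLog_sum_le _ fun _ _ => measureReal_nonneg
    _ = ∑ s, negMulLog (μ.real (Z ⁻¹' {s})) := sum_fiberwise _ _ _

variable [MeasurableSpace S] [MeasurableSingletonClass S]
  [MeasurableSpace T] [MeasurableSingletonClass T]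

lemma indepFun_iff_measureReal_inter_preimage_singleton [IsFiniteMeasure μ]
    (h₁ : Measurable Z₁) (h₂ : Measurable Z₂) :
    IndepFun Z₁ Z₂ μ ↔ ∀ s t,
      μ.real (Z₁ ⁻¹' {s} ∩ Z₂ ⁻¹' {t}) = μ.real (Z₁ ⁻¹' {s}) * μ.real (Z₂ ⁻¹' {t}) := by
  rw [indepFun_iff_map_prod_eq_prod_map_map h₁.aemeasurable h₂.aemeasurable,
    ext_iff_measureReal_singleton, Prod.forall]
  refine forall₂_congr fun s t => ?_
  rw [map_measureReal_apply (h₁.prodMk h₂) (measurableSet_singleton _),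
    ← Set.singleton_prod_singleton, measureReal_prod_prod, Set.mk_preimage_prod,
    map_measureReal_apply h₁ (measurableSet_singleton _),
    map_measureReal_apply h₂ (measurableSet_singleton _)]

variable [IsProbabilityMeasure μ]

lemma mutInfo_eq_sum_klFun (h₁ : Measurable Z₁) (h₂ : Measurable Z₂) :
    mutInfo μ Z₁ Z₂ = ∑ s, ∑ t, μ.real (Z₁ ⁻¹' {s}) * μ.real (Z₂ ⁻¹' {t}) *
      klFun (μ.real (Z₁ ⁻¹' {s} ∩ Z₂ ⁻¹' {t}) / (μ.real (Z₁ ⁻¹' {s}) * μ.real (Z₂ ⁻¹' {t}))) := by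
  have hmass : ∑ s, ∑ t, (μ.real (Z₁ ⁻¹' {s} ∩ Z₂ ⁻¹' {t})
      - μ.real (Z₁ ⁻¹' {s}) * μ.real (Z₂ ⁻¹' {t})) = 0 := by
    simp_rw [sum_sub_distrib, sum_measureReal_inter_preimage h₂, ← mul_sum,
      sum_measureReal_preimage h₂, mul_one, sub_self]
  calc mutInfo μ Z₁ Z₂
      = ∑ s, ∑ t, (μ.real (Z₁ ⁻¹' {s}) * μ.real (Z₂ ⁻¹' {t}) *
          klFun (μ.real (Z₁ ⁻¹' {s} ∩ Z₂ ⁻¹' {t}) / (μ.real (Z₁ ⁻¹' {s}) * μ.real (Z₂ ⁻¹' {t})))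
        + (μ.real (Z₁ ⁻¹' {s} ∩ Z₂ ⁻¹' {t}) - μ.real (Z₁ ⁻¹' {s}) * μ.real (Z₂ ⁻¹' {t}))) := by
        rw [mutInfo, ent_pair_eq_sum, ent_eq_sum_left h₂, ent_eq_sum_right h₁]
        simp only [← sum_add_distrib, ← sum_sub_distrib]
        refine sum_congr rfl fun s _ => sum_congr rfl fun t _ => ?_
        rw [add_sub_assoc', ← mul_log_sub_log_sub_log measureReal_nonneg
          (measureReal_mono Set.inter_subset_left) (measureReal_mono Set.inter_subset_right),
          negMulLog]
        ring
    _ = _ := by simp only [sum_add_distrib, hmass, add_zero]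

lemma mutInfo_nonneg (h₁ : Measurable Z₁) (h₂ : Measurable Z₂) : 0 ≤ mutInfo μ Z₁ Z₂ := by
  rw [mutInfo_eq_sum_klFun h₁ h₂]
  exact sum_nonneg fun s _ => sum_nonneg fun t _ =>
    mul_klFun_div_nonneg measureReal_nonneg (mul_nonneg measureReal_nonneg measureReal_nonneg)

lemma mutInfo_eq_zero_iff_indepFun (h₁ : Measurable Z₁) (h₂ : Measurable Z₂) :
    mutInfo μ Z₁ Z₂ = 0 ↔ IndepFun Z₁ Z₂ μ := by
  rw [mutInfo_eq_sum_klFun h₁ h₂, indepFun_iff_measureReal_inter_preimage_singleton h₁ h₂,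
    Fintype.sum_sum_eq_zero_iff_of_nonneg fun s t => mul_klFun_div_nonneg measureReal_nonneg
      (mul_nonneg measureReal_nonneg measureReal_nonneg)]
  refine forall₂_congr fun s t => mul_klFun_div_eq_zero_iff measureReal_nonneg
    (mul_nonneg measureReal_nonneg measureReal_nonneg) fun h => ?_
  rcases mul_eq_zero.1 h with h | h
  · exact measureReal_mono_null Set.inter_subset_left h
  · exact measureReal_mono_null Set.inter_subset_right h

end JointDistribution

section Conditioning

variable {α β : Type*} [MeasurableSpace α] [MeasurableSpace β] {μ : Measure Ω} [IsFiniteMeasure μ]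
  {W : Ω → α} {Z : Ω → β} {B : Set β}

lemma cond_preimage_apply_of_indepFun (h : IndepFun W Z μ) (hZ : Measurable Z)
    (hB : MeasurableSet B) (hμB : μ (Z ⁻¹' B) ≠ 0) {A : Set α} (hA : MeasurableSet A) :
    μ[W ⁻¹' A | Z ⁻¹' B] = μ (W ⁻¹' A) := by
  rw [cond_apply (hZ hB), Set.inter_comm, h.measure_inter_preimage_eq_mul _ _ hA hB, mul_comm,
    mul_assoc, ENNReal.mul_inv_cancel hμB (measure_ne_top _ _), mul_one]

lemma ProbabilityTheory.IndepFun.cond_preimage (h : IndepFun W Z μ) (hZ : Measurable Z)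
    (hB : MeasurableSet B) (hμB : μ (Z ⁻¹' B) ≠ 0) : IndepFun W Z μ[|Z ⁻¹' B] := by
  rw [indepFun_iff_measure_inter_preimage_eq_mul]
  intro A C hA hC
  have hinter : Z ⁻¹' B ∩ (W ⁻¹' A ∩ Z ⁻¹' C) = W ⁻¹' A ∩ Z ⁻¹' (B ∩ C) := by
    ext ω
    simp only [Set.mem_inter_iff, Set.mem_preimage]
    tauto
  rw [cond_preimage_apply_of_indepFun h hZ hB hμB hA, cond_apply (hZ hB), cond_apply (hZ hB),
    hinter, h.measure_inter_preimage_eq_mul _ _ hA (hB.inter hC), ← Set.preimage_inter]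
  ring

lemma ent_cond_preimage_of_indepFun [MeasurableSingletonClass α] [Fintype α]
    (h : IndepFun W Z μ) (hZ : Measurable Z) (hB : MeasurableSet B) (hμB : μ (Z ⁻¹' B) ≠ 0) :
    ent μ[|Z ⁻¹' B] W = ent μ W := by
  simp only [ent, cond_preimage_apply_of_indepFun h hZ hB hμB (measurableSet_singleton _)]

end Conditioning

lemma ent_le_of_indepFun_of_condEnt_pair_eq_zero {𝒴 𝒞 𝒲 : Type*}
    [Fintype 𝒴] [MeasurableSpace 𝒴] [MeasurableSingletonClass 𝒴]
    [Fintype 𝒞] [MeasurableSpace 𝒞] [MeasurableSingletonClass 𝒞]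
    [Fintype 𝒲] [MeasurableSpace 𝒲] [MeasurableSingletonClass 𝒲]
    {μ : Measure Ω} [IsProbabilityMeasure μ] {Y : Ω → 𝒴} {C : Ω → 𝒞} {W : Ω → 𝒲}
    (hY : Measurable Y) (hC : Measurable C) (hW : Measurable W) (hYW : IndepFun Y W μ)
    (hdec : condEnt μ Y (fun ω => (C ω, W ω)) = 0) :
    ent μ Y ≤ ent μ C := by
  have hYW' := (mutInfo_eq_zero_iff_indepFun hY hW).2 hYW
  have hCW := mutInfo_nonneg (μ := μ) hC hW
  rw [mutInfo] at hYW' hCW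
  rw [condEnt, sub_eq_zero] at hdec
  calc ent μ Y = ent μ (fun ω => (Y ω, W ω)) - ent μ W := by linarith
    _ ≤ ent μ (fun ω => (Y ω, C ω, W ω)) - ent μ W := by
      gcongr
      exact ent_comp_le (hY.prodMk (hC.prodMk hW)) fun p => (p.1, p.2.2)
    _ = ent μ (fun ω => (C ω, W ω)) - ent μ W := by rw [hdec]
    _ ≤ ent μ C := by linarith

theorem converse_entropy_bound_general
    {𝒳 𝒴 𝒞 𝒲 : Type*}
    [Fintype 𝒳] [MeasurableSpace 𝒳] [MeasurableSingletonClass 𝒳]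
    [Fintype 𝒴] [MeasurableSpace 𝒴] [MeasurableSingletonClass 𝒴]
    [Fintype 𝒞] [MeasurableSpace 𝒞] [MeasurableSingletonClass 𝒞]
    [Fintype 𝒲] [MeasurableSpace 𝒲] [MeasurableSingletonClass 𝒲]
    (μ : Measure Ω) [IsProbabilityMeasure μ]
    (X : Ω → 𝒳) (Y : Ω → 𝒴) (C : Ω → 𝒞) (W : Ω → 𝒲)
    (hX : Measurable X) (hY : Measurable Y) (hC : Measurable C) (hW : Measurable W)
    (hWindep : IndepFun W (fun ω => (X ω, Y ω)) μ)
    (hCX : mutInfo μ C X = 0)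
    (hdec : condEnt μ Y (fun ω => (C ω, W ω)) = 0) :
    ∀ x : 𝒳, 0 < μ (X ⁻¹' {x}) → ent μ C ≥ ent (μ[|X ⁻¹' {x}]) Y := by
  intro x hx
  have : IsProbabilityMeasure μ[|X ⁻¹' {x}] := cond_isProbabilityMeasure hx.ne'
  have hevent : X ⁻¹' {x} = (fun ω => (X ω, Y ω)) ⁻¹' ({x} ×ˢ Set.univ) := by
    rw [Set.mk_preimage_prod, Set.preimage_univ, Set.inter_univ]
  have hYW : IndepFun Y W μ[|X ⁻¹' {x}] := by
    rw [hevent] at hx ⊢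
    exact ((hWindep.cond_preimage (hX.prodMk hY) ((measurableSet_singleton x).prod .univ)
      hx.ne').comp measurable_id measurable_snd).symm
  calc ent μ[|X ⁻¹' {x}] Y
      ≤ ent μ[|X ⁻¹' {x}] C := ent_le_of_indepFun_of_condEnt_pair_eq_zero hY hC hW hYW
        (condEnt_eq_zero_of_absolutelyContinuous cond_absolutelyContinuous hY hdec)
    _ = ent μ C := ent_cond_preimage_of_indepFun ((mutInfo_eq_zero_iff_indepFun hC hX).1 hCX) hX
        (measurableSet_singleton x) hx.ne'

/-- Converse entropy bound (information core of Theorem 3, bound (27)). -/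
theorem converse_entropy_bound
    {𝒳 𝒴 𝒞 𝒲 : Type*}
    [Fintype 𝒳] [Nonempty 𝒳] [MeasurableSpace 𝒳] [MeasurableSingletonClass 𝒳]
    [Fintype 𝒴] [Nonempty 𝒴] [MeasurableSpace 𝒴] [MeasurableSingletonClass 𝒴]
    [Fintype 𝒞] [Nonempty 𝒞] [MeasurableSpace 𝒞] [MeasurableSingletonClass 𝒞]
    [Fintype 𝒲] [Nonempty 𝒲] [MeasurableSpace 𝒲] [MeasurableSingletonClass 𝒲]
    (μ : Measure Ω) [IsProbabilityMeasure μ]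
    (X : Ω → 𝒳) (Y : Ω → 𝒴) (C : Ω → 𝒞) (W : Ω → 𝒲)
    (hX : Measurable X) (hY : Measurable Y) (hC : Measurable C) (hW : Measurable W)
    (hWindep : IndepFun W (fun ω => (X ω, Y ω)) μ)
    (hCX : mutInfo μ C X = 0)
    (hdec : condEnt μ Y (fun ω => (C ω, W ω)) = 0) :
    ∀ x : 𝒳, 0 < μ (X ⁻¹' {x}) → ent μ C ≥ ent (μ[|X ⁻¹' {x}]) Y :=
  converse_entropy_bound_general μ X Y C W hX hY hC hW hWindep hCX hdec
end
end
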